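/- Let η be an alternating bilinear map V × V → V' and ρ the induced semiform on Y = V' × V. For any u₀ ∈ V and v₀ ∈ V', the map F : Y → Y defined by F([v,u]) = [v + η(u,u₀) + v₀, u + u₀] is a bijection satisfying ρ(F(p₁),F(p₂)) = ρ(p₁,p₂) for all p₁, p₂ ∈ Y, and F maps [0,0] to [v₀,u₀]. Consequently the automorphism group of the relation ρ(·,·)=0 acts transitively on Y. -/

import Mathlib

/-!
The map `[v, u] ↦ [v + η(u, u₀) + v₀, u + u₀]` is a "Heisenberg translation": it is inverted by
subtracting the same correction, and it shifts `ρ` by `η(u₀, u₂) + η(u₂, u₀) + η(u₀, u₀)`,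
which vanishes because an alternating map is skew-symmetric.
-/

namespace LinearMap

variable {R V V' : Type*} [CommRing R] [AddCommGroup V] [Module R V]
  [AddCommGroup V'] [Module R V'] (η : V →ₗ[R] V →ₗ[R] V')

def semiform (p q : V' × V) : V' :=
  η p.2 q.2 - (p.1 - q.1)

def semiformTranslate (v₀ : V') (u₀ : V) : V' × V ≃ V' × V where
  toFun p := (p.1 + η p.2 u₀ + v₀, p.2 + u₀)
  invFun p := (p.1 - η (p.2 - u₀) u₀ - v₀, p.2 - u₀)
  left_inv p := by ext <;> simp; abel
  right_inv p := by ext <;> simp; abel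

variable {η}

theorem semiformTranslate_apply (v₀ : V') (u₀ : V) (p : V' × V) :
    semiformTranslate η v₀ u₀ p = (p.1 + η p.2 u₀ + v₀, p.2 + u₀) :=
  rfl

theorem semiform_semiformTranslate (hη : η.IsAlt) (v₀ : V') (u₀ : V) (p q : V' × V) :
    semiform η (semiformTranslate η v₀ u₀ p) (semiformTranslate η v₀ u₀ q) =
      semiform η p q := by
  simp only [semiform, semiformTranslate_apply, map_add, add_apply, hη.self_eq_zero,
    ← hη.neg u₀ q.2]
  abel

end LinearMap

open LinearMap in
theorem stmt18_general {F V V' : Type*} [Field F] [AddCommGroup V] [Module F V]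
    [AddCommGroup V'] [Module F V']
    (η : V →ₗ[F] V →ₗ[F] V') (halt : ∀ u : V, η u u = 0)
    (ρ : (V' × V) → (V' × V) → V')
    (hρ : ∀ p q : V' × V, ρ p q = η p.2 q.2 - (p.1 - q.1))
    (v₀ : V') (u₀ : V)
    (T : (V' × V) → (V' × V))
    (hT : ∀ (v : V') (u : V), T (v, u) = (v + η u u₀ + v₀, u + u₀)) :
    Function.Bijective T ∧
    (∀ p₁ p₂ : V' × V, ρ (T p₁) (T p₂) = ρ p₁ p₂) ∧
    T (0, 0) = (v₀, u₀) := by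
  obtain rfl : T = semiformTranslate η v₀ u₀ := funext fun p => hT p.1 p.2
  obtain rfl : ρ = semiform η := funext₂ hρ
  exact ⟨(semiformTranslate η v₀ u₀).bijective, semiform_semiformTranslate halt v₀ u₀,
    by simp [semiformTranslate_apply]⟩

theorem stmt18 {F V V' : Type*} [Field F] [AddCommGroup V] [Module F V]
    [AddCommGroup V'] [Module F V']
    (h2 : (2 : F) ≠ 0) (η : V →ₗ[F] V →ₗ[F] V') (halt : ∀ u : V, η u u = 0)
    (ρ : (V' × V) → (V' × V) → V')
    (hρ : ∀ p q : V' × V, ρ p q = η p.2 q.2 - (p.1 - q.1))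
    (v₀ : V') (u₀ : V)
    (T : (V' × V) → (V' × V))
    (hT : ∀ (v : V') (u : V), T (v, u) = (v + η u u₀ + v₀, u + u₀)) :
    Function.Bijective T ∧
    (∀ p₁ p₂ : V' × V, ρ (T p₁) (T p₂) = ρ p₁ p₂) ∧
    T (0, 0) = (v₀, u₀) :=
  stmt18_general η halt ρ hρ v₀ u₀ T hT
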